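/- arXiv:0905.4543 — 5 statements merged into one kernel-verified Lean document; each statement's English description precedes it below -/
import Mathlib

section
/- For every integer l ≥ 5 and every integer k with 1 ≤ k ≤ l, (l+1)^k ≤ 2^(k - 1 + binom(l,2) - binom(l-k,2)). -/
lemma aux_pow2 (n : ℕ) : n + 6 ≤ 2 ^ (n + 3) := by
  induction n with
  | zero => norm_num
  | succ n ih =>
    have h : 2 ^ (n + 1 + 3) = 2 * 2 ^ (n + 3) := by ring
    omega

lemma sq_le_two_pow (n : ℕ) (h : 6 ≤ n) : n ^ 2 ≤ 2 ^ n := by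
  induction n, h using Nat.le_induction with
  | base => norm_num
  | succ n hn ih =>
    have h1 : (n + 1) ^ 2 ≤ 2 * n ^ 2 := by nlinarith
    calc (n + 1) ^ 2 ≤ 2 * n ^ 2 := h1
      _ ≤ 2 * 2 ^ n := by omega
      _ = 2 ^ (n + 1) := by ring

lemma two_mul_choose_two (n : ℕ) : 2 * n.choose 2 = n * (n - 1) := by
  induction n with
  | zero => simp
  | succ n ih =>
    rw [Nat.choose_succ_succ, Nat.choose_one_right, Nat.mul_add, ih]
    cases n with
    | zero => simp
    | succ p => simp only [Nat.add_sub_cancel]; ring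

lemma endpoint_l (l : ℕ) (hl : 5 ≤ l) : (l + 1) ^ (2 * l) ≤ 2 ^ (l * l + l - 2) := by
  induction l, hl using Nat.le_induction with
  | base => norm_num
  | succ l hl ih =>
    have hsq : (l + 1 + 1) ^ 2 ≤ 2 * (l + 1) ^ 2 := by nlinarith
    have hsq2 : (l + 1) ^ 2 ≤ 2 ^ (l + 1) := sq_le_two_pow (l + 1) (by omega)
    have h1 : 1 * 1 ≤ l * l := Nat.mul_le_mul (by omega) (by omega)
    have hexp : (l + 1) * (l + 1) + (l + 1) - 2 = (l * l + l - 2) + (2 * l + 2) := by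
      have hb : (l + 1) * (l + 1) = l * l + 2 * l + 1 := by ring
      omega
    rw [hexp]
    calc (l + 1 + 1) ^ (2 * (l + 1)) = ((l + 1 + 1) ^ 2) ^ (l + 1) := by rw [pow_mul]
      _ ≤ (2 * (l + 1) ^ 2) ^ (l + 1) := Nat.pow_le_pow_left hsq _
      _ = 2 ^ (l + 1) * ((l + 1) ^ (2 * l) * (l + 1) ^ 2) := by
          rw [mul_pow, ← pow_mul, Nat.mul_add, Nat.mul_one, ← pow_add]
      _ ≤ 2 ^ (l + 1) * (2 ^ (l * l + l - 2) * 2 ^ (l + 1)) :=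
          Nat.mul_le_mul_left _ (Nat.mul_le_mul ih hsq2)
      _ = 2 ^ ((l * l + l - 2) + (2 * l + 2)) := by ring

theorem stmt_5 (l k : ℕ) (hl : 5 ≤ l) (hk : 1 ≤ k) (hkl : k ≤ l) :
    ((l : ℝ) + 1) ^ k ≤ 2 ^ (k - 1 + (Nat.choose l 2 - Nat.choose (l - k) 2)) := by
  obtain ⟨j, rfl⟩ : ∃ j, k = j + 1 := ⟨k - 1, by omega⟩
  obtain ⟨m, rfl⟩ : ∃ m, l = j + 1 + m := ⟨l - (j + 1), by omega⟩
  simp only [Nat.add_sub_cancel, Nat.add_sub_cancel_left]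
  set l : ℕ := j + 1 + m with hldef
  set B : ℕ := Nat.choose l 2 - Nat.choose m 2 with hBdef
  set e : ℕ := j + B with hedef
  have hjm : 4 ≤ j + m := by omega
  -- endpoint k = 1 : l + 1 ≤ 2^(l-1) = 2^(j+m)
  have hL1 : l + 1 ≤ 2 ^ (j + m) := by
    have h1 := aux_pow2 (j + m - 4)
    have h2 : 2 ^ (j + m - 4 + 3) ≤ 2 ^ (j + m) := Nat.pow_le_pow_right (by norm_num) (by omega)
    omega
  -- endpoint k = l
  have hL2 : (l + 1) ^ (2 * l) ≤ 2 ^ (l * l + l - 2) := endpoint_l l (by omega)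
  -- choose facts
  have hmono : Nat.choose m 2 ≤ Nat.choose l 2 := Nat.choose_le_choose 2 (by omega)
  have h2B : 2 * B = l * (j + m) - m * (m - 1) := by
    rw [hBdef, Nat.mul_sub, two_mul_choose_two, two_mul_choose_two]
    congr 2
    omega
  have hE2 : m * (m - 1) + m = m * m := by
    cases m with
    | zero => simp
    | succ p => simp only [Nat.add_sub_cancel]; ring
  have hle : m * (m - 1) ≤ l * (j + m) := Nat.mul_le_mul (by omega) (by omega)
  have hE4 : 2 * B + m * m = l * (j + m) + m := by omega
  have h1 : 1 * 1 ≤ l * l := Nat.mul_le_mul (by omega) (by omega)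
  have hE3 : (l * l + l - 2) + 2 = l * l + l := by omega
  -- key exponent inequality (concavity)
  have hkey : 2 * m * (j + m) + (l * l + l - 2) * j ≤ 2 * (j + m) * e := by
    rw [hedef]
    zify at hE4 hE3 ⊢
    have hE4' : ((j : ℤ) + m) * (2 * B + m * m) = (j + m) * (l * (j + m) + m) := by
      rw [hE4]
    have hlz : (l : ℤ) = (j : ℤ) + 1 + m := by rw [hldef]; push_cast; ring
    rw [hlz] at hE4' hE3
    have hE3' : ((l * l + l - 2 : ℕ) : ℤ) * j + 2 * j
        = (((j : ℤ) + 1 + m) * ((j : ℤ) + 1 + m) + ((j : ℤ) + 1 + m)) * j := by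
      linear_combination (j : ℤ) * hE3
    have hpos : (0 : ℤ) ≤ (j : ℤ) * j * m + j * m * m := by positivity
    linarith [hE4', hE3', hpos]
  -- combined nat inequality
  have hNat : (l + 1) ^ (2 * (j + m) * (j + 1)) ≤ 2 ^ (2 * (j + m) * e) := by
    have hsplit : 2 * (j + m) * (j + 1) = 2 * m + 2 * l * j := by
      rw [hldef]; ring
    calc (l + 1) ^ (2 * (j + m) * (j + 1))
        = (l + 1) ^ (2 * m) * ((l + 1) ^ (2 * l)) ^ j := by
          rw [← pow_mul, ← pow_add, hsplit]
      _ ≤ (2 ^ (j + m)) ^ (2 * m) * (2 ^ (l * l + l - 2)) ^ j :=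
          Nat.mul_le_mul (Nat.pow_le_pow_left hL1 _) (Nat.pow_le_pow_left hL2 _)
      _ = 2 ^ ((j + m) * (2 * m) + (l * l + l - 2) * j) := by
          rw [← pow_mul, ← pow_mul, ← pow_add]
      _ ≤ 2 ^ (2 * (j + m) * e) := by
          apply Nat.pow_le_pow_right (by norm_num)
          calc (j + m) * (2 * m) + (l * l + l - 2) * j
              = 2 * m * (j + m) + (l * l + l - 2) * j := by ring
            _ ≤ 2 * (j + m) * e := hkey
  -- conclude in ℝ
  have hne : 2 * (j + m) ≠ 0 := by omega
  apply le_of_pow_le_pow_left₀ hne (by positivity)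
  rw [← pow_mul, ← pow_mul]
  have h : ((l : ℝ) + 1) ^ (2 * (j + m) * (j + 1)) ≤ 2 ^ (2 * (j + m) * e) := by
    exact_mod_cast hNat
  calc ((l : ℝ) + 1) ^ ((j + 1) * (2 * (j + m)))
      = ((l : ℝ) + 1) ^ (2 * (j + m) * (j + 1)) := by rw [mul_comm]
    _ ≤ 2 ^ (2 * (j + m) * e) := h
    _ = 2 ^ (e * (2 * (j + m))) := by rw [mul_comm]
end

section
/- Let n ≥ 2 and l_1,...,l_n be positive integers with l = l_1 + ... + l_n ≥ 5. Let 1 ≤ k ≤ l and let j_1,...,j_n be integers with 0 ≤ j_i ≤ l_i and j_1 + ... + j_n = l - k. Then ∏_{i=1}^n binom(l_i+2, j_i+2) ≤ (2^(k-1)/k!) · 2^(binom(l,2) - binom(l-k,2)) · binom(k; l_1-j_1,...,l_n-j_n). -/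
/-!
Put `m i = L i - j i`, so `∑ m i = k`. As
`binom(L i + 2, j i + 2) * (m i)! = (L i + 2).descFactorial (m i)` and
`multinomial(m) * ∏ (m i)! = k!`, the inequality reads
`∏ (L i + 2).descFactorial (m i) ≤ 2^(k-1) * 2^(binom(l,2) - binom(l-k,2))`. Merging the falling
factorials one index at a time bounds the left side by
`(l + 2).descFactorial k = (l+2)(l+1)⋯(l-k+3)`. Compared factor by factor with
`2^(l-1) * 2^(l-1) * 2^(l-2) ⋯ 2^(l-k+1)`, only the last factor `3` (when `k = l`) exceeds its
partner `2`, and the first factor absorbs this since `3(l+2) ≤ 2^l` for `l ≥ 5`.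
-/

open Finset
open scoped Nat

namespace Nat

theorem descFactorial_mul_descFactorial_le_add {a b c p q : ℕ} (hq : q ≤ b) :
    (a + c).descFactorial p * (b + c).descFactorial q ≤ (a + b + c).descFactorial (p + q) := by
  rw [← descFactorial_mul_descFactorial (Nat.le_add_left q p), Nat.add_sub_cancel]
  gcongr <;> omega

theorem prod_descFactorial_le_descFactorial_sum {ι : Type*} (s : Finset ι) (c : ℕ)
    {L m : ι → ℕ} (hm : ∀ i ∈ s, m i ≤ L i) :
    ∏ i ∈ s, (L i + c).descFactorial (m i) ≤
      (∑ i ∈ s, L i + c).descFactorial (∑ i ∈ s, m i) := by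
  classical
  induction s using Finset.induction_on with
  | empty => simp
  | insert a s ha ih =>
    have hm' : ∀ i ∈ s, m i ≤ L i := fun i hi => hm i (mem_insert_of_mem hi)
    rw [prod_insert ha, sum_insert ha, sum_insert ha]
    calc _ ≤ (L a + c).descFactorial (m a) *
            (∑ i ∈ s, L i + c).descFactorial (∑ i ∈ s, m i) :=
          Nat.mul_le_mul_left _ (ih hm')
      _ ≤ _ := descFactorial_mul_descFactorial_le_add (sum_le_sum hm')

theorem add_two_le_two_pow {s : ℕ} (hs : 2 ≤ s) : s + 2 ≤ 2 ^ s := by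
  induction s, hs using Nat.le_induction with
  | base => norm_num
  | succ s _ ih => rw [pow_succ]; omega

theorem three_mul_add_two_le_two_pow {l : ℕ} (hl : 5 ≤ l) : 3 * (l + 2) ≤ 2 ^ l := by
  induction l, hl using Nat.le_induction with
  | base => norm_num
  | succ l _ ih => rw [pow_succ]; omega

theorem choose_two_sub_choose_two_sub_succ {l k : ℕ} (h : k < l) :
    l.choose 2 - (l - (k + 1)).choose 2 = l.choose 2 - (l - k).choose 2 + (l - (k + 1)) := by
  have hsucc : (l - k).choose 2 = (l - (k + 1)).choose 2 + (l - (k + 1)) := by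
    rw [show l - k = l - (k + 1) + 1 by omega, choose_succ_succ', choose_one_right, add_comm]
  have hle : (l - k).choose 2 ≤ l.choose 2 := choose_le_choose 2 (sub_le l k)
  omega

theorem three_mul_descFactorial_le_two_pow {l k : ℕ} (hl : 5 ≤ l) (hk : 1 ≤ k) (hkl : k < l) :
    3 * (l + 2).descFactorial k ≤ 2 ^ k * 2 ^ (l.choose 2 - (l - k).choose 2) := by
  induction k, hk using Nat.le_induction with
  | base =>
    have hE : l.choose 2 - (l - 1).choose 2 = l - 1 := by
      simpa using choose_two_sub_choose_two_sub_succ (l := l) (k := 0) (by omega)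
    rw [hE, descFactorial_one, ← pow_add, show 1 + (l - 1) = l by omega]
    exact three_mul_add_two_le_two_pow hl
  | succ k hk ih =>
    have hfactor : l + 2 - k ≤ 2 ^ (l - (k + 1)) * 2 := by
      rw [← pow_succ, show l - (k + 1) + 1 = l - k by omega]
      have := add_two_le_two_pow (s := l - k) (by omega)
      omega
    rw [descFactorial_succ, choose_two_sub_choose_two_sub_succ (by omega), pow_add, pow_succ]
    calc 3 * ((l + 2 - k) * (l + 2).descFactorial k)
        = (l + 2 - k) * (3 * (l + 2).descFactorial k) := by ring
      _ ≤ (2 ^ (l - (k + 1)) * 2) * (2 ^ k * 2 ^ (l.choose 2 - (l - k).choose 2)) :=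
          Nat.mul_le_mul hfactor (ih (by omega))
      _ = _ := by ring

theorem descFactorial_le_two_pow {l k : ℕ} (hl : 5 ≤ l) (hkl : k ≤ l) :
    (l + 2).descFactorial k ≤ 2 ^ (k - 1) * 2 ^ (l.choose 2 - (l - k).choose 2) := by
  rcases Nat.eq_zero_or_pos k with rfl | hk
  · simp
  rcases hkl.lt_or_eq with hlt | heq
  · have h := three_mul_descFactorial_le_two_pow hl hk hlt
    rw [show 2 ^ k = 2 * 2 ^ (k - 1) by rw [← pow_succ']; congr 1; omega, mul_assoc] at h
    omega
  · have h := three_mul_descFactorial_le_two_pow hl (k := l - 1) (by omega) (by omega)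
    have hlast : (l + 2).descFactorial l = 3 * (l + 2).descFactorial (l - 1) := by
      obtain ⟨p, rfl⟩ : ∃ p, l = p + 1 := ⟨l - 1, by omega⟩
      rw [Nat.add_sub_cancel, descFactorial_succ, show p + 1 + 2 - p = 3 by omega]
    have hE : (l - (l - 1)).choose 2 = (l - l).choose 2 := by
      rw [Nat.sub_self, show l - (l - 1) = 1 by omega]
      rfl
    rw [heq, hlast, ← hE]
    exact h

end Nat

theorem stmt_6_general (n : ℕ) (l : ℕ) (L : Fin n → ℕ)
    (hsum : ∑ i, L i = l) (hl : 5 ≤ l)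
    (k : ℕ) (hkl : k ≤ l)
    (j : Fin n → ℕ) (hj : ∀ i, j i ≤ L i) (hjsum : ∑ i, j i = l - k) :
    (∏ i, (Nat.choose (L i + 2) (j i + 2) : ℝ)) ≤
      2 ^ (k - 1) / (Nat.factorial k : ℝ) *
        2 ^ (Nat.choose l 2 - Nat.choose (l - k) 2) *
        (Nat.multinomial Finset.univ (fun i => L i - j i) : ℝ) := by
  set m : Fin n → ℕ := fun i => L i - j i
  have hmsum : ∑ i, m i = k := by
    have h : ∑ i, m i + ∑ i, j i = ∑ i, L i := by
      rw [← sum_add_distrib]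
      exact sum_congr rfl fun i _ => Nat.sub_add_cancel (hj i)
    omega
  have hchoose : ∀ i, (L i + 2).choose (j i + 2) * (m i)! = (L i + 2).descFactorial (m i) := by
    intro i
    rw [Nat.descFactorial_eq_factorial_mul_choose, mul_comm,
      Nat.choose_symm_of_eq_add (a := j i + 2) (b := m i) (by have := hj i; simp only [m]; omega)]
  have hbound : ∏ i, (L i + 2).descFactorial (m i) ≤
      2 ^ (k - 1) * 2 ^ (l.choose 2 - (l - k).choose 2) := by
    refine (Nat.prod_descFactorial_le_descFactorial_sum univ 2 fun i _ => Nat.sub_le _ _).trans ?_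
    rw [hsum, hmsum]
    exact Nat.descFactorial_le_two_pow hl hkl
  have hmultinomial : (∏ i, ((m i)! : ℝ)) * Nat.multinomial univ m = k ! := by
    exact_mod_cast hmsum ▸ Nat.multinomial_spec univ m
  have hfact : (0 : ℝ) < ∏ i, ((m i)! : ℝ) := prod_pos fun i _ => by positivity
  rw [← mul_le_mul_iff_of_pos_right hfact]
  calc (∏ i, ((L i + 2).choose (j i + 2) : ℝ)) * ∏ i, ((m i)! : ℝ)
      = ∏ i, ((L i + 2).descFactorial (m i) : ℝ) := by
        rw [← prod_mul_distrib]
        exact_mod_cast prod_congr rfl fun i _ => hchoose i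
    _ ≤ 2 ^ (k - 1) * 2 ^ (l.choose 2 - (l - k).choose 2) := by exact_mod_cast hbound
    _ = _ := by
        rw [mul_assoc _ (Nat.multinomial univ m : ℝ), mul_comm (Nat.multinomial univ m : ℝ),
          hmultinomial]
        field_simp

theorem stmt_6 (n : ℕ) (hn : 2 ≤ n) (l : ℕ) (L : Fin n → ℕ)
    (hL : ∀ i, 0 < L i) (hsum : ∑ i, L i = l) (hl : 5 ≤ l)
    (k : ℕ) (hk : 1 ≤ k) (hkl : k ≤ l)
    (j : Fin n → ℕ) (hj : ∀ i, j i ≤ L i) (hjsum : ∑ i, j i = l - k) :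
    (∏ i, (Nat.choose (L i + 2) (j i + 2) : ℝ)) ≤
      2 ^ (k - 1) / (Nat.factorial k : ℝ) *
        2 ^ (Nat.choose l 2 - Nat.choose (l - k) 2) *
        (Nat.multinomial Finset.univ (fun i => L i - j i) : ℝ) :=
  stmt_6_general n l L hsum hl k hkl j hj hjsum
end

section
/- Let n ≥ 2 and l_1,...,l_n be positive integers with l = l_1 + ... + l_n ≥ 5. For 0 ≤ k ≤ l define a_k = 2^(binom(l-k,2)) · Σ binom(l-k; j_1,...,j_n) · ∏_{i=1}^n binom(l_i+2, j_i+2), the sum over all tuples (j_1,...,j_n) with 0 ≤ j_i ≤ l_i and j_1 + ... + j_n = l - k. Then for every k with 1 ≤ k ≤ l, a_k ≤ (2^(k-1)/k!) · a_0. -/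
/-!
Write `a k = 2 ^ (l - k).choose 2 * S (l - k)`, where `S m` sums the weights
`W j = multinomial j * ∏ i, (L i + 2).choose (j i + 2)` over all `j` with `∑ j = m`
(the constraint `j i ≤ L i` is automatic, as `W j = 0` otherwise). Moving one unit into the
part `i` gives `(∑ j + 1) * (L i - j i) * W j = (j i + 1) * (j i + 3) * W (j + e i)`;
summing over `i` and `j` and reindexing by `j' = j + e i` yields `(l - m) * S m ≤ (m + 3) * S (m + 1)`.
So `c k = k ! * a k` satisfies `2 ^ (l - k) * c k ≤ (l - k + 3) * c (k - 1)`, whence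
`2 * c 1 ≤ c 0` (as `2 * (l + 2) ≤ 2 ^ (l - 1)` for `l ≥ 5`), `c k ≤ 2 * c (k - 1)` for `k < l`,
and `c l ≤ 3 * c (l - 1)`.
-/

open Finset Function
open scoped Nat

section Update

variable {ι : Type*} [DecidableEq ι] {s : Finset ι} {i : ι}

lemma sum_update_add_apply (hi : i ∈ s) (j : ι → ℕ) (b : ℕ) :
    ∑ x ∈ s, update j i b x + j i = ∑ x ∈ s, j x + b := by
  rw [sum_update_of_mem hi, sdiff_singleton_eq_erase, ← add_sum_erase s j hi]
  ring

lemma prod_update_eq_mul_prod_erase {M : Type*} [CommMonoid M] (hi : i ∈ s) (g : ι → ℕ → M)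
    (j : ι → ℕ) (b : ℕ) :
    ∏ x ∈ s, g x (update j i b x) = g i b * ∏ x ∈ s.erase i, g x (j x) := by
  rw [← sdiff_singleton_eq_erase, ← prod_update_of_mem hi]
  exact prod_congr rfl fun x _ => apply_update g j i b x

lemma Nat.succ_mul_multinomial_update (hi : i ∈ s) (j : ι → ℕ) :
    (j i + 1) * Nat.multinomial s (update j i (j i + 1))
      = (∑ x ∈ s, j x + 1) * Nat.multinomial s j := by
  have hfact : ∏ x ∈ s, (update j i (j i + 1) x)! = (j i + 1) * ∏ x ∈ s, (j x)! := by
    rw [prod_update_eq_mul_prod_erase hi (fun _ m => m !), ← mul_prod_erase s _ hi,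
      Nat.factorial_succ, mul_assoc]
  have hsum : ∑ x ∈ s, update j i (j i + 1) x = ∑ x ∈ s, j x + 1 := by
    have := sum_update_add_apply hi j (j i + 1)
    omega
  apply Nat.eq_of_mul_eq_mul_left (prod_pos fun x _ => (j x).factorial_pos)
  calc (∏ x ∈ s, (j x)!) * ((j i + 1) * Nat.multinomial s (update j i (j i + 1)))
      = (∏ x ∈ s, (update j i (j i + 1) x)!) * Nat.multinomial s (update j i (j i + 1)) := by
        rw [hfact]; ring
    _ = (∑ x ∈ s, j x + 1)! := by rw [Nat.multinomial_spec, hsum]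
    _ = (∏ x ∈ s, (j x)!) * ((∑ x ∈ s, j x + 1) * Nat.multinomial s j) := by
        rw [Nat.factorial_succ, ← Nat.multinomial_spec s j]; ring

end Update

lemma sum_antidiagonalTuple_update_succ {M : Type*} [AddCommMonoid M] {n : ℕ} (m : ℕ)
    (i : Fin n) {f : (Fin n → ℕ) → M} (hf : ∀ j, j i = 0 → f j = 0) :
    ∑ j ∈ Nat.antidiagonalTuple n m, f (update j i (j i + 1))
      = ∑ j ∈ Nat.antidiagonalTuple n (m + 1), f j := by
  rw [← sum_filter_of_ne (p := fun j => j i ≠ 0) fun j _ hj h0 => hj (hf j h0)]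
  refine sum_nbij' (fun j => update j i (j i + 1)) (fun j => update j i (j i - 1)) ?_ ?_ ?_ ?_
    fun _ _ => rfl
  · intro j hj
    have := sum_update_add_apply (mem_univ i) j (j i + 1)
    simp only [mem_filter, Nat.mem_antidiagonalTuple, update_self] at hj ⊢
    omega
  · intro j hj
    have := sum_update_add_apply (mem_univ i) j (j i - 1)
    simp only [mem_filter, Nat.mem_antidiagonalTuple] at hj ⊢
    omega
  · intro j _
    simp
  · intro j hj
    rw [mem_filter] at hj
    simp [Nat.sub_add_cancel (Nat.one_le_iff_ne_zero.mpr hj.2)]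

def compositionWeight {n : ℕ} (L j : Fin n → ℕ) : ℕ :=
  Nat.multinomial univ j * ∏ i, (L i + 2).choose (j i + 2)

def compositionWeightSum {n : ℕ} (L : Fin n → ℕ) (m : ℕ) : ℕ :=
  ∑ j ∈ Nat.antidiagonalTuple n m, compositionWeight L j

section CompositionWeight

variable {n : ℕ} (L : Fin n → ℕ)

lemma compositionWeight_eq_zero_of_lt {j : Fin n → ℕ} {i : Fin n} (h : L i < j i) :
    compositionWeight L j = 0 := by
  rw [compositionWeight, prod_eq_zero (mem_univ i) (Nat.choose_eq_zero_of_lt (by omega)),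
    mul_zero]

lemma sum_filter_le_compositionWeight (m : ℕ) :
    ∑ j ∈ (Nat.antidiagonalTuple n m).filter (fun j => ∀ i, j i ≤ L i), compositionWeight L j
      = compositionWeightSum L m := by
  refine sum_filter_of_ne fun j _ hj i => ?_
  by_contra! h
  exact hj (compositionWeight_eq_zero_of_lt L h)

lemma succ_mul_compositionWeight_update (j : Fin n → ℕ) (i : Fin n) :
    (∑ x, j x + 1) * ((L i - j i) * compositionWeight L j)
      = (j i + 1) * (j i + 3) * compositionWeight L (update j i (j i + 1)) := by
  have hchoose := Nat.choose_succ_right_eq (L i + 2) (j i + 2)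
  rw [show L i + 2 - (j i + 2) = L i - j i by omega] at hchoose
  have hmult := Nat.succ_mul_multinomial_update (mem_univ i) j
  simp only [compositionWeight]
  rw [prod_update_eq_mul_prod_erase (mem_univ i) (fun x m => (L x + 2).choose (m + 2)),
    ← mul_prod_erase univ (fun x => (L x + 2).choose (j x + 2)) (mem_univ i)]
  calc (∑ x, j x + 1) * ((L i - j i) * (Nat.multinomial univ j *
        ((L i + 2).choose (j i + 2) * ∏ x ∈ univ.erase i, (L x + 2).choose (j x + 2))))
      = ((∑ x, j x + 1) * Nat.multinomial univ j) * ((L i + 2).choose (j i + 2) * (L i - j i)) *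
          ∏ x ∈ univ.erase i, (L x + 2).choose (j x + 2) := by ring
    _ = _ := by rw [← hmult, ← hchoose]; ring

lemma compositionWeightSum_step (m : ℕ) :
    (∑ i, L i - m) * compositionWeightSum L m ≤ (m + 3) * compositionWeightSum L (m + 1) := by
  refine Nat.le_of_mul_le_mul_left ?_ m.succ_pos
  calc (m + 1) * ((∑ i, L i - m) * compositionWeightSum L m)
      ≤ ∑ j ∈ Nat.antidiagonalTuple n m,
          ∑ i, (∑ x, j x + 1) * ((L i - j i) * compositionWeight L j) := by
        rw [compositionWeightSum, mul_sum, mul_sum]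
        refine sum_le_sum fun j hj => ?_
        rw [Nat.mem_antidiagonalTuple] at hj
        have hsub : ∑ i, L i - m ≤ ∑ i, (L i - j i) := by
          rw [tsub_le_iff_right, ← hj, ← sum_add_distrib]
          exact sum_le_sum fun i _ => le_tsub_add
        rw [← mul_sum, ← sum_mul, hj]
        gcongr
    _ = ∑ i, ∑ j ∈ Nat.antidiagonalTuple n (m + 1),
          j i * (j i + 2) * compositionWeight L j := by
        rw [sum_comm]
        refine sum_congr rfl fun i _ => ?_
        rw [← sum_antidiagonalTuple_update_succ m i fun j h => by simp [h]]
        simp only [succ_mul_compositionWeight_update, update_self]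
    _ ≤ ∑ i, ∑ j ∈ Nat.antidiagonalTuple n (m + 1),
          j i * (m + 3) * compositionWeight L j := by
        refine sum_le_sum fun i _ => sum_le_sum fun j hj => ?_
        rw [Nat.mem_antidiagonalTuple] at hj
        have := hj ▸ single_le_sum (fun x _ => Nat.zero_le (j x)) (mem_univ i)
        exact Nat.mul_le_mul_right _ (Nat.mul_le_mul_left _ (by omega))
    _ = (m + 1) * ((m + 3) * compositionWeightSum L (m + 1)) := by
        rw [sum_comm, compositionWeightSum, mul_sum, mul_sum]
        refine sum_congr rfl fun j hj => ?_
        rw [← sum_mul, ← sum_mul, Nat.mem_antidiagonalTuple.mp hj]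
        ring

end CompositionWeight

lemma two_pow_mul_factorial_mul_le {n l : ℕ} {L : Fin n → ℕ} (hsum : ∑ i, L i = l)
    {a : ℕ → ℕ} (ha : ∀ k, a k = 2 ^ (l - k).choose 2 * compositionWeightSum L (l - k))
    {k : ℕ} (hk : 1 ≤ k) (hkl : k ≤ l) :
    2 ^ (l - k) * (k ! * a k) ≤ (l - k + 3) * ((k - 1)! * a (k - 1)) := by
  obtain ⟨m, hm⟩ : ∃ m, l - k = m := ⟨_, rfl⟩
  have hstep := compositionWeightSum_step L m
  rw [hsum, show l - m = k by omega] at hstep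
  have hchoose : (m + 1).choose 2 = m + m.choose 2 := by
    rw [Nat.choose_succ_succ', Nat.choose_one_right]
  rw [ha, ha, hm, show l - (k - 1) = m + 1 by omega, hchoose, pow_add,
    ← Nat.mul_factorial_pred (by omega : k ≠ 0)]
  calc 2 ^ m * (k * (k - 1)! * (2 ^ m.choose 2 * compositionWeightSum L m))
      = (k - 1)! * 2 ^ m * 2 ^ m.choose 2 * (k * compositionWeightSum L m) := by ring
    _ ≤ (k - 1)! * 2 ^ m * 2 ^ m.choose 2 * ((m + 3) * compositionWeightSum L (m + 1)) := by
        gcongr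
    _ = (m + 3) * ((k - 1)! * (2 ^ m * 2 ^ m.choose 2 * compositionWeightSum L (m + 1))) := by
        ring

lemma le_two_pow_mul_of_two_pow_mul_le {l : ℕ} (hl : 5 ≤ l) {c : ℕ → ℕ}
    (hc : ∀ k, 1 ≤ k → k ≤ l → 2 ^ (l - k) * c k ≤ (l - k + 3) * c (k - 1))
    {k : ℕ} (hk : 1 ≤ k) (hkl : k ≤ l) : c k ≤ 2 ^ (k - 1) * c 0 := by
  have hc₁ : 2 * c 1 ≤ c 0 := by
    have h := hc 1 le_rfl (by omega)
    have hpow : 2 * (l - 1 + 3) ≤ 2 ^ (l - 1) := by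
      have : l - 5 < 2 ^ (l - 5) := Nat.lt_two_pow_self
      rw [show l - 1 = l - 5 + 4 by omega, pow_add]
      omega
    refine Nat.le_of_mul_le_mul_left ?_ (Nat.two_pow_pos (l - 1))
    calc 2 ^ (l - 1) * (2 * c 1) = 2 * (2 ^ (l - 1) * c 1) := by ring
      _ ≤ 2 * ((l - 1 + 3) * c 0) := by simpa using Nat.mul_le_mul_left 2 h
      _ ≤ 2 ^ (l - 1) * c 0 := by rw [← mul_assoc]; exact Nat.mul_le_mul_right _ hpow
  have hdouble : ∀ k, 1 ≤ k → k + 1 < l → c (k + 1) ≤ 2 * c k := by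
    intro k hk hkl
    have h := hc (k + 1) (by omega) (by omega)
    rw [Nat.add_sub_cancel] at h
    obtain ⟨t, ht⟩ : ∃ t, l - (k + 1) = t + 1 := ⟨l - (k + 2), by omega⟩
    have hpow : t + 1 + 3 ≤ 2 * 2 ^ (t + 1) := by
      have : t + 1 < 2 ^ (t + 1) := Nat.lt_two_pow_self
      omega
    rw [ht] at h
    refine Nat.le_of_mul_le_mul_left ?_ (Nat.two_pow_pos (t + 1))
    calc 2 ^ (t + 1) * c (k + 1) ≤ (t + 1 + 3) * c k := h
      _ ≤ 2 * 2 ^ (t + 1) * c k := Nat.mul_le_mul_right _ hpow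
      _ = 2 ^ (t + 1) * (2 * c k) := by ring
  have hmid : ∀ k, 1 ≤ k → k < l → c k ≤ 2 ^ (k - 1) * c 1 := by
    intro k hk
    induction k, hk using Nat.le_induction with
    | base => simp
    | succ k hk ih =>
      intro hkl
      calc c (k + 1) ≤ 2 * c k := hdouble k hk hkl
        _ ≤ 2 * (2 ^ (k - 1) * c 1) := Nat.mul_le_mul_left 2 (ih (by omega))
        _ = 2 ^ (k + 1 - 1) * c 1 := by
          rw [show k + 1 - 1 = k - 1 + 1 by omega, pow_succ]; ring
  rcases Nat.lt_or_ge k l with hlt | hge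
  · calc c k ≤ 2 ^ (k - 1) * c 1 := hmid k hk hlt
      _ ≤ 2 ^ (k - 1) * c 0 := Nat.mul_le_mul_left _ (by omega)
  · obtain rfl : k = l := le_antisymm hkl hge
    have hlast := hc k hk le_rfl
    rw [Nat.sub_self, pow_zero, one_mul, zero_add] at hlast
    have hprev := hmid (k - 1) (by omega) (by omega)
    rw [show k - 1 = k - 2 + 1 by omega, pow_succ]
    rw [show k - 1 - 1 = k - 2 by omega] at hprev
    nlinarith [Nat.two_pow_pos (k - 2)]

theorem stmt_7_general (n : ℕ) (l : ℕ) (L : Fin n → ℕ)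
    (hsum : ∑ i, L i = l) (hl : 5 ≤ l)
    (a : ℕ → ℕ)
    (ha : ∀ k, a k = 2 ^ (Nat.choose (l - k) 2) *
      ∑ j ∈ (Finset.Nat.antidiagonalTuple n (l - k)).filter (fun j => ∀ i, j i ≤ L i),
        Nat.multinomial Finset.univ j * ∏ i, Nat.choose (L i + 2) (j i + 2))
    (k : ℕ) (hk : 1 ≤ k) (hkl : k ≤ l) :
    (a k : ℝ) ≤ 2 ^ (k - 1) / (Nat.factorial k : ℝ) * (a 0 : ℝ) := by
  have hS : ∀ k, a k = 2 ^ (l - k).choose 2 * compositionWeightSum L (l - k) := fun k => by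
    rw [ha, ← sum_filter_le_compositionWeight]
    rfl
  have hbound : k ! * a k ≤ 2 ^ (k - 1) * (0 ! * a 0) :=
    le_two_pow_mul_of_two_pow_mul_le (c := fun k => k ! * a k) hl
      (fun _ hk hkl => two_pow_mul_factorial_mul_le hsum hS hk hkl) hk hkl
  rw [Nat.factorial_zero, one_mul] at hbound
  rw [div_mul_eq_mul_div, le_div_iff₀ (by positivity), mul_comm]
  exact_mod_cast hbound

theorem stmt_7 (n : ℕ) (hn : 2 ≤ n) (l : ℕ) (L : Fin n → ℕ)
    (hL : ∀ i, 0 < L i) (hsum : ∑ i, L i = l) (hl : 5 ≤ l)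
    (a : ℕ → ℕ)
    (ha : ∀ k, a k = 2 ^ (Nat.choose (l - k) 2) *
      ∑ j ∈ (Finset.Nat.antidiagonalTuple n (l - k)).filter (fun j => ∀ i, j i ≤ L i),
        Nat.multinomial Finset.univ j * ∏ i, Nat.choose (L i + 2) (j i + 2))
    (k : ℕ) (hk : 1 ≤ k) (hkl : k ≤ l) :
    (a k : ℝ) ≤ 2 ^ (k - 1) / (Nat.factorial k : ℝ) * (a 0 : ℝ) :=
  stmt_7_general n l L hsum hl a ha k hk hkl
end

section
/- Let n ≥ 2 and l_1,...,l_n be positive integers with l = l_1 + ... + l_n ≥ 5. With a_k defined as a_k = 2^(binom(l-k,2)) · Σ_{(j_i)} binom(l-k; j_1,...,j_n) · ∏_i binom(l_i+2, j_i+2) (sum over 0 ≤ j_i ≤ l_i with Σ j_i = l-k), we have Σ_{k=1}^l a_k < ((e^2 - 1)/2) · 2^(binom(l,2)) · binom(l; l_1,...,l_n). -/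
/-!
Write `M` for the multinomial coefficient of `L`. Rewriting both multinomial coefficients through
factorials, each summand of `a k` is at most `M (l-k)!/l!` times `∏ xᵢ ^ dᵢ / dᵢ!` with
`xᵢ = Lᵢ (Lᵢ + 2)` and `dᵢ = Lᵢ - jᵢ`; summing over all `d` with `∑ dᵢ = k` is the multinomial
theorem, so `a k ≤ M · coeffBound l k`, using `∑ xᵢ ≤ l (l + 1)` because every `Lᵢ < l`.
The normalized sum `∑ₖ coeffBound l k / 2 ^ C(l,2)` is at most `3` by induction on `l ≥ 5`: passing
from `l` to `l + 1` multiplies each old term by at most `7/10`, and the new diagonal term is at most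
`9/10`, since `(1 + 2/m)^m ≤ e²`. Finally `3 < (e² - 1)/2`.
-/

open Finset Nat Real

lemma factorial_le_pow_mul_factorial_sub {n k : ℕ} (h : k ≤ n) : n ! ≤ n ^ k * (n - k)! := by
  rw [← factorial_mul_descFactorial h, mul_comm]
  exact Nat.mul_le_mul_right _ (descFactorial_le_pow n k)

lemma choose_add_two_mul_factorial_le {L j : ℕ} (h : j ≤ L) :
    (L + 2).choose (j + 2) * (L - j)! * L ! ≤ (L * (L + 2)) ^ (L - j) * j ! := by
  have hchoose : (L + 2).choose (j + 2) * (j + 2)! * (L - j)! = (L + 2)! := by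
    simpa [show L + 2 - (j + 2) = L - j by omega] using
      choose_mul_factorial_mul_factorial (show j + 2 ≤ L + 2 by omega)
  have h₁ := factorial_le_pow_mul_factorial_sub (show L - j ≤ L + 2 by omega)
  have h₂ := factorial_le_pow_mul_factorial_sub (show L - j ≤ L by omega)
  rw [show L + 2 - (L - j) = j + 2 by omega] at h₁
  rw [show L - (L - j) = j by omega] at h₂
  refine Nat.le_of_mul_le_mul_right ?_ (factorial_pos (j + 2))
  calc (L + 2).choose (j + 2) * (L - j)! * L ! * (j + 2)! = (L + 2)! * L ! := by
        rw [← hchoose]; ring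
    _ ≤ (L + 2) ^ (L - j) * (j + 2)! * (L ^ (L - j) * j !) := Nat.mul_le_mul h₁ h₂
    _ = (L * (L + 2)) ^ (L - j) * j ! * (j + 2)! := by rw [mul_pow]; ring

lemma cast_multinomial {ι : Type*} (s : Finset ι) (f : ι → ℕ) :
    (multinomial s f : ℝ) = (∑ i ∈ s, f i)! / ∏ i ∈ s, ((f i)! : ℝ) := by
  rw [eq_div_iff (by positivity), mul_comm]
  exact_mod_cast multinomial_spec s f

lemma sum_piAntidiag_prod_pow_div_factorial {ι : Type*} [DecidableEq ι] (s : Finset ι)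
    (x : ι → ℝ) (k : ℕ) :
    ∑ d ∈ piAntidiag s k, ∏ i ∈ s, x i ^ d i / (d i)! = (∑ i ∈ s, x i) ^ k / k ! := by
  rw [Finset.sum_pow_eq_sum_piAntidiag, sum_div]
  refine sum_congr rfl fun d hd => ?_
  rw [cast_multinomial, (mem_piAntidiag.1 hd).1, prod_div_distrib]
  field_simp

section

variable {ι : Type*} [Fintype ι]

lemma multinomial_mul_prod_choose_le {L j : ι → ℕ} (hj : ∀ i, j i ≤ L i) :
    (multinomial univ j * ∏ i, (L i + 2).choose (j i + 2) : ℝ) ≤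
      multinomial univ L * (∑ i, j i)! / (∑ i, L i)! *
        ∏ i, ((L i * (L i + 2) : ℕ) : ℝ) ^ (L i - j i) / (L i - j i)! := by
  have hi : ∀ i, ((L i + 2).choose (j i + 2) : ℝ) / (j i)! ≤
      ((L i * (L i + 2) : ℕ) : ℝ) ^ (L i - j i) / (L i - j i)! / (L i)! := by
    intro i
    rw [div_le_iff₀ (by positivity), div_div, div_mul_eq_mul_div, le_div_iff₀ (by positivity),
      ← mul_assoc]
    exact_mod_cast choose_add_two_mul_factorial_le (hj i)
  calc (multinomial univ j * ∏ i, (L i + 2).choose (j i + 2) : ℝ)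
      = (∑ i, j i)! * ∏ i, ((L i + 2).choose (j i + 2) : ℝ) / (j i)! := by
        rw [cast_multinomial, prod_div_distrib]; push_cast; ring
    _ ≤ (∑ i, j i)! * ∏ i, ((L i * (L i + 2) : ℕ) : ℝ) ^ (L i - j i) / (L i - j i)! / (L i)! :=
        mul_le_mul_of_nonneg_left
          (prod_le_prod (fun i _ => by positivity) fun i _ => hi i) (by positivity)
    _ = _ := by
        rw [cast_multinomial, prod_div_distrib (f := fun i => _ / _)]
        field_simp

lemma sum_filter_multinomial_mul_prod_choose_le [DecidableEq ι] {l k : ℕ} (L : ι → ℕ)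
    (hsum : ∑ i, L i = l) (hk : k ≤ l) :
    (∑ j ∈ (piAntidiag univ (l - k)).filter (fun j => ∀ i, j i ≤ L i),
        multinomial univ j * ∏ i, (L i + 2).choose (j i + 2) : ℝ) ≤
      multinomial univ L * (l - k)! / l ! * (∑ i, ((L i * (L i + 2) : ℕ) : ℝ)) ^ k / k ! := by
  set S := (piAntidiag univ (l - k)).filter (fun j => ∀ i, j i ≤ L i)
  set g : (ι → ℕ) → ℝ := fun d => ∏ i, ((L i * (L i + 2) : ℕ) : ℝ) ^ d i / (d i)!
  have hS : ∀ j ∈ S, ∑ i, j i = l - k ∧ ∀ i, j i ≤ L i := fun j hj => by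
    simpa [S, mem_piAntidiag] using hj
  have hinj : Set.InjOn (fun (j : ι → ℕ) i => L i - j i) S := fun j hj j' hj' h => by
    funext i
    have : L i - j i = L i - j' i := congrFun h i
    have := (hS j hj).2 i
    have := (hS j' hj').2 i
    omega
  have himage : S.image (fun j i => L i - j i) ⊆ piAntidiag univ k := by
    simp only [subset_iff, mem_image, mem_piAntidiag]
    rintro _ ⟨j, hj, rfl⟩
    refine ⟨?_, by simp⟩
    rw [sum_tsub_distrib _ fun i _ => (hS j hj).2 i, hsum, (hS j hj).1]
    omega
  calc (∑ j ∈ S, multinomial univ j * ∏ i, (L i + 2).choose (j i + 2) : ℝ)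
      ≤ ∑ j ∈ S, multinomial univ L * (l - k)! / l ! * g (fun i => L i - j i) := by
        refine sum_le_sum fun j hj => ?_
        have := multinomial_mul_prod_choose_le (hS j hj).2
        rwa [(hS j hj).1, hsum] at this
    _ = multinomial univ L * (l - k)! / l ! * ∑ d ∈ S.image (fun j i => L i - j i), g d := by
        rw [sum_image hinj, mul_sum]
    _ ≤ multinomial univ L * (l - k)! / l ! * ∑ d ∈ piAntidiag univ k, g d := by
        gcongr
    _ = _ := by
        rw [sum_piAntidiag_prod_pow_div_factorial]; ring

lemma sum_mul_add_two_le {L : ι → ℕ} (hlt : ∀ i, L i < ∑ j, L j) :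
    ∑ i, L i * (L i + 2) ≤ (∑ i, L i) * (∑ i, L i + 1) := by
  rw [sum_mul]
  exact sum_le_sum fun i _ => Nat.mul_le_mul_left _ (by have := hlt i; omega)

end

lemma add_two_pow_le_exp_two_mul_pow (m : ℕ) : ((m : ℝ) + 2) ^ m ≤ exp 2 * (m : ℝ) ^ m := by
  rcases m.eq_zero_or_pos with rfl | hm
  · simp [one_le_exp zero_le_two]
  have hm' : (0 : ℝ) < m := by exact_mod_cast hm
  calc ((m : ℝ) + 2) ^ m = (1 - (-2) / m) ^ m * (m : ℝ) ^ m := by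
        rw [← mul_pow]; congr 1; field_simp; ring
    _ ≤ exp 2 * (m : ℝ) ^ m := by
        gcongr
        simpa using one_sub_div_pow_le_exp_neg (n := m) (t := -2) (by linarith)

lemma exp_two_lt_eight : exp 2 < 8 := by
  have h := exp_one_lt_d9
  rw [show (2 : ℝ) = 1 + 1 by norm_num, exp_add]
  nlinarith [exp_pos 1]

lemma three_lt_exp_two_sub_one_div_two : 3 < (exp 2 - 1) / 2 := by
  have h := exp_one_gt_d9
  rw [show (2 : ℝ) = 1 + 1 by norm_num, exp_add]
  nlinarith

lemma choose_succ_two (m : ℕ) : (m + 1).choose 2 = m + m.choose 2 := by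
  simp [choose_succ_succ]

noncomputable def coeffBound (l k : ℕ) : ℝ :=
  2 ^ (l - k).choose 2 * (l - k)! * ((l : ℝ) * (l + 1)) ^ k / (l ! * k !)

lemma coeffBound_nonneg (l k : ℕ) : 0 ≤ coeffBound l k := by
  unfold coeffBound; positivity

lemma coeffBound_self (m : ℕ) : coeffBound m m = ((m : ℝ) * (m + 1)) ^ m / (m ! * m !) := by
  simp [coeffBound]

lemma coeffBound_succ_self_le {m : ℕ} (hm : 4 ≤ m) :
    coeffBound (m + 1) (m + 1) ≤ 2 ^ m * coeffBound m m := by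
  have h16 : (16 : ℝ) ≤ 2 ^ m :=
    calc (16 : ℝ) = 2 ^ 4 := by norm_num
      _ ≤ 2 ^ m := pow_le_pow_right₀ one_le_two hm
  have key : ((m : ℝ) + 2) ^ (m + 1) ≤ 2 ^ m * (m : ℝ) ^ m * (m + 1) := by
    calc ((m : ℝ) + 2) ^ (m + 1) = ((m : ℝ) + 2) ^ m * (m + 2) := pow_succ _ _
      _ ≤ (8 * (m : ℝ) ^ m) * (2 * (m + 1)) := by
          gcongr
          · exact (add_two_pow_le_exp_two_mul_pow m).trans (by gcongr; exact exp_two_lt_eight.le)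
          · linarith
      _ = 16 * (m : ℝ) ^ m * (m + 1) := by ring
      _ ≤ 2 ^ m * (m : ℝ) ^ m * (m + 1) := by gcongr
  have hlhs : coeffBound (m + 1) (m + 1) =
      ((m : ℝ) + 2) ^ (m + 1) * ((m + 1) ^ (m + 1) / ((m + 1) ^ 2 * (m ! * m !))) := by
    rw [coeffBound_self, factorial_succ]; push_cast; rw [mul_pow]; field_simp; ring
  have hrhs : 2 ^ m * coeffBound m m =
      2 ^ m * (m : ℝ) ^ m * (m + 1) * ((m + 1) ^ (m + 1) / ((m + 1) ^ 2 * (m ! * m !))) := by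
    rw [coeffBound_self, mul_pow]; field_simp; ring
  rw [hlhs, hrhs]
  gcongr

lemma coeffBound_self_le {m : ℕ} (hm : 6 ≤ m) : coeffBound m m ≤ 9 / 10 * 2 ^ m.choose 2 := by
  induction m, hm using Nat.le_induction with
  | base => norm_num [coeffBound_self, factorial, Nat.choose]
  | succ m hm ih =>
    calc coeffBound (m + 1) (m + 1) ≤ 2 ^ m * coeffBound m m := coeffBound_succ_self_le (by omega)
      _ ≤ 2 ^ m * (9 / 10 * 2 ^ m.choose 2) := by gcongr
      _ = 9 / 10 * 2 ^ (m + 1).choose 2 := by rw [choose_succ_two, pow_add]; ring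

lemma coeffBound_succ_le {l k : ℕ} (hk : 1 ≤ k) (hkl : k ≤ l) (hl : 5 ≤ l) :
    coeffBound (l + 1) k ≤ 7 / 10 * 2 ^ l * coeffBound l k := by
  have hratio : coeffBound (l + 1) k =
      coeffBound l k * (2 ^ (l - k) * (((l - k : ℕ) + 1) / (l + 1)) * (((l : ℝ) + 2) / l) ^ k) := by
    obtain ⟨m, rfl⟩ := exists_add_of_le hkl
    simp only [coeffBound, show k + m + 1 - k = m + 1 by omega, add_tsub_cancel_left,
      choose_succ_two, factorial_succ, pow_add]
    push_cast
    rw [mul_pow, mul_pow, div_pow]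
    field_simp
    ring
  have h5 : (5 : ℝ) ≤ l := by exact_mod_cast hl
  have hfrac : (((l - k : ℕ) : ℝ) + 1) / (l + 1) ≤ 1 := by
    rw [div_le_one (by positivity)]
    gcongr
    exact_mod_cast Nat.sub_le l k
  have hpow : (((l : ℝ) + 2) / l) ^ k ≤ 7 / 10 * 2 ^ k := by
    calc (((l : ℝ) + 2) / l) ^ k ≤ (7 / 10 * 2) ^ k := by
          gcongr
          rw [div_le_iff₀ (by positivity)]
          linarith
      _ = (7 / 10) ^ k * 2 ^ k := mul_pow _ _ _
      _ ≤ 7 / 10 * 2 ^ k := by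
          gcongr
          exact pow_le_of_le_one (by norm_num) (by norm_num) (by omega)
  rw [hratio, mul_comm (7 / 10 * 2 ^ l)]
  refine mul_le_mul_of_nonneg_left ?_ (coeffBound_nonneg l k)
  calc 2 ^ (l - k) * ((((l - k : ℕ) : ℝ) + 1) / (l + 1)) * (((l : ℝ) + 2) / l) ^ k
      ≤ 2 ^ (l - k) * 1 * (7 / 10 * 2 ^ k) := by gcongr
    _ = 7 / 10 * 2 ^ l := by
        rw [mul_one, mul_left_comm, ← pow_add, Nat.sub_add_cancel hkl]

lemma sum_coeffBound_le {l : ℕ} (hl : 5 ≤ l) :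
    ∑ k ∈ Icc 1 l, coeffBound l k ≤ 3 * 2 ^ l.choose 2 := by
  induction l, hl using Nat.le_induction with
  | base => norm_num [sum_Icc_succ_top, coeffBound, factorial, Nat.choose]
  | succ l hl ih =>
    have hstep : ∑ k ∈ Icc 1 l, coeffBound (l + 1) k ≤
        7 / 10 * 2 ^ l * ∑ k ∈ Icc 1 l, coeffBound l k := by
      rw [mul_sum]
      exact sum_le_sum fun k hk => coeffBound_succ_le (mem_Icc.1 hk).1 (mem_Icc.1 hk).2 hl
    calc ∑ k ∈ Icc 1 (l + 1), coeffBound (l + 1) k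
        = ∑ k ∈ Icc 1 l, coeffBound (l + 1) k + coeffBound (l + 1) (l + 1) :=
          sum_Icc_succ_top (by omega) _
      _ ≤ 7 / 10 * 2 ^ l * (3 * 2 ^ l.choose 2) + 9 / 10 * 2 ^ (l + 1).choose 2 := by
          gcongr
          · exact hstep.trans (by gcongr)
          · exact coeffBound_self_le (by omega)
      _ = 3 * 2 ^ (l + 1).choose 2 := by rw [choose_succ_two, pow_add]; ring

lemma cast_two_pow_mul_sum_le_multinomial_mul_coeffBound {ι : Type*} [Fintype ι] [DecidableEq ι]
    {l k : ℕ} (L : ι → ℕ) (hsum : ∑ i, L i = l) (hlt : ∀ i, L i < l) (hk : k ≤ l) :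
    ((2 ^ (l - k).choose 2 * ∑ j ∈ (piAntidiag univ (l - k)).filter (fun j => ∀ i, j i ≤ L i),
        multinomial univ j * ∏ i, (L i + 2).choose (j i + 2) : ℕ) : ℝ) ≤
      multinomial univ L * coeffBound l k := by
  have hX : ∑ i, ((L i * (L i + 2) : ℕ) : ℝ) ≤ (l : ℝ) * (l + 1) := by
    have := sum_mul_add_two_le (L := L) (by rwa [hsum])
    rw [hsum] at this
    exact_mod_cast this
  push_cast
  calc (2 : ℝ) ^ (l - k).choose 2 *
        ∑ j ∈ (piAntidiag univ (l - k)).filter (fun j => ∀ i, j i ≤ L i),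
          (multinomial univ j * ∏ i, ((L i + 2).choose (j i + 2) : ℝ))
      ≤ 2 ^ (l - k).choose 2 *
          (multinomial univ L * (l - k)! / l ! * (∑ i, ((L i * (L i + 2) : ℕ) : ℝ)) ^ k / k !) := by
        gcongr
        exact_mod_cast sum_filter_multinomial_mul_prod_choose_le L hsum hk
    _ ≤ 2 ^ (l - k).choose 2 *
          (multinomial univ L * (l - k)! / l ! * ((l : ℝ) * (l + 1)) ^ k / k !) := by
        gcongr
    _ = multinomial univ L * coeffBound l k := by
        unfold coeffBound; field_simp

theorem stmt_8 (n : ℕ) (hn : 2 ≤ n) (l : ℕ) (L : Fin n → ℕ)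
    (hL : ∀ i, 0 < L i) (hsum : ∑ i, L i = l) (hl : 5 ≤ l)
    (a : ℕ → ℕ)
    (ha : ∀ k, a k = 2 ^ (Nat.choose (l - k) 2) *
      ∑ j ∈ (Finset.Nat.antidiagonalTuple n (l - k)).filter (fun j => ∀ i, j i ≤ L i),
        Nat.multinomial Finset.univ j * ∏ i, Nat.choose (L i + 2) (j i + 2)) :
    (∑ k ∈ Finset.Icc 1 l, (a k : ℝ)) <
      (Real.exp 2 - 1) / 2 * 2 ^ (Nat.choose l 2) * (Nat.multinomial Finset.univ L : ℝ) := by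
  have hlt : ∀ i, L i < l := fun i => by
    obtain ⟨j, hji⟩ := Fintype.exists_ne_of_one_lt_card (by rw [Fintype.card_fin]; omega) i
    rw [← hsum]
    exact single_lt_sum hji (mem_univ i) (mem_univ j) (hL j) fun _ _ _ => Nat.zero_le _
  have hM : (0 : ℝ) < multinomial univ L := by exact_mod_cast multinomial_pos univ L
  have hak : ∀ k ∈ Icc 1 l, (a k : ℝ) ≤ multinomial univ L * coeffBound l k := fun k hk => by
    rw [ha, ← piAntidiag_univ_fin_eq_antidiagonalTuple]
    -- `convert`, not `exact`: the two filters carry different (equal) decidability instances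
    convert cast_two_pow_mul_sum_le_multinomial_mul_coeffBound L hsum hlt (mem_Icc.1 hk).2
  calc ∑ k ∈ Icc 1 l, (a k : ℝ) ≤ ∑ k ∈ Icc 1 l, multinomial univ L * coeffBound l k :=
        sum_le_sum hak
    _ ≤ multinomial univ L * (3 * 2 ^ l.choose 2) := by
        rw [← mul_sum]; gcongr; exact sum_coeffBound_le hl
    _ < (exp 2 - 1) / 2 * 2 ^ l.choose 2 * multinomial univ L := by
        rw [mul_comm]; gcongr; exact three_lt_exp_two_sub_one_div_two
end

section
/- Let n ≥ 2 and l_1,...,l_n be positive integers with l = l_1 + ... + l_n ≥ 5. With a_k as in the previous context, Σ_{k=1}^l 2^k · a_k < ((e^4 - 1)/2) · 2^(binom(l,2)) · binom(l; l_1,...,l_n). -/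
/-!
Put `d = L - j`. The identity
`multinomial j * l.descFactorial k = multinomial L * ∏ (L i).descFactorial (d i)`,
the bound `∏ (L i + 2).descFactorial (d i) ≤ (l + 2).descFactorial k` and the multivariate
Vandermonde identity `∑_{|j| = l - k} ∏ (L i).choose (j i) = l.choose k` give
`a k ≤ 2 ^ (l - k).choose 2 * (l + 2).choose k * multinomial L`. Comparing consecutive `k`, for
`l ≥ 5` the factor `(l + 2).descFactorial k * 2 ^ (l - k).choose 2` is at most
`2 ^ (l.choose 2 + k - 1)`, so `2 ^ k * a k ≤ 4 ^ k / k! * a 0 / 2`, and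
`∑_{k ≥ 1} 4 ^ k / k! < exp 4 - 1`.
-/

open Finset Nat

theorem Nat.descFactorial_add (n a b : ℕ) :
    n.descFactorial (a + b) = n.descFactorial a * (n - a).descFactorial b := by
  rw [← descFactorial_mul_descFactorial (Nat.le_add_right a b), Nat.add_sub_cancel_left, mul_comm]

theorem Finset.prod_descFactorial_add_le {ι : Type*} {s : Finset ι} {L d : ι → ℕ} (c : ℕ)
    (h : ∀ i ∈ s, d i ≤ L i) :
    ∏ i ∈ s, (L i + c).descFactorial (d i) ≤ (∑ i ∈ s, L i + c).descFactorial (∑ i ∈ s, d i) := by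
  induction s using Finset.cons_induction with
  | empty => simp
  | cons i s hi ih =>
    have hdi := h i (mem_cons_self i s)
    rw [prod_cons, sum_cons, sum_cons, descFactorial_add]
    exact Nat.mul_le_mul (descFactorial_le _ (by omega))
      ((ih fun j hj => h j (mem_cons_of_mem hj)).trans (descFactorial_le _ (by omega)))

theorem Finset.sum_piAntidiag_prod_choose {ι : Type*} [DecidableEq ι] (s : Finset ι) (L : ι → ℕ)
    (k : ℕ) : ∑ d ∈ s.piAntidiag k, ∏ i ∈ s, (L i).choose (d i) = (∑ i ∈ s, L i).choose k := by
  induction s using Finset.cons_induction generalizing k with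
  | empty => cases k <;> simp
  | cons i s hi ih =>
    rw [piAntidiag_cons hi, sum_disjiUnion, sum_cons, Nat.add_choose_eq]
    refine sum_congr rfl fun p _ => ?_
    rw [sum_map, ← ih p.2, mul_sum]
    refine sum_congr rfl fun d hd => ?_
    have hdi : d i = 0 := by
      by_contra hne
      exact hi ((mem_piAntidiag.mp hd).2 i hne)
    have hs : ∀ j ∈ s, j ≠ i := fun j hj hji => hi (hji ▸ hj)
    rw [prod_cons]
    simp only [addRightEmbedding_apply, Pi.add_apply, hdi, if_true, zero_add]
    congr 1
    exact prod_congr rfl fun j hj => by simp [hs j hj]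

namespace Nat

section Multinomial

variable {ι : Type*} {s : Finset ι} {j d L : ι → ℕ}

theorem multinomial_mul_descFactorial_sum (h : ∀ i ∈ s, j i + d i = L i) :
    multinomial s j * (∑ i ∈ s, L i).descFactorial (∑ i ∈ s, d i) =
      multinomial s L * ∏ i ∈ s, (L i).descFactorial (d i) := by
  have hsum : ∑ i ∈ s, L i = ∑ i ∈ s, j i + ∑ i ∈ s, d i := by
    rw [← sum_congr rfl h, sum_add_distrib]
  refine Nat.eq_of_mul_eq_mul_left (prod_pos fun i (_ : i ∈ s) => (j i).factorial_pos) ?_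
  calc (∏ i ∈ s, (j i)!) * (multinomial s j * (∑ i ∈ s, L i).descFactorial (∑ i ∈ s, d i))
      = (∑ i ∈ s, L i - ∑ i ∈ s, d i)! * (∑ i ∈ s, L i).descFactorial (∑ i ∈ s, d i) := by
        rw [← mul_assoc, multinomial_spec, hsum, Nat.add_sub_cancel]
    _ = (∏ i ∈ s, (L i)!) * multinomial s L := by
        rw [factorial_mul_descFactorial (by omega), multinomial_spec]
    _ = (∏ i ∈ s, (L i - d i)! * (L i).descFactorial (d i)) * multinomial s L := by
        congr 1
        exact prod_congr rfl fun i hi =>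
          (factorial_mul_descFactorial (by have := h i hi; omega)).symm
    _ = (∏ i ∈ s, (j i)!) * (multinomial s L * ∏ i ∈ s, (L i).descFactorial (d i)) := by
        rw [prod_mul_distrib, prod_congr rfl fun i hi => by rw [← h i hi, Nat.add_sub_cancel]]
        ring

theorem multinomial_mul_prod_choose_le (c : ℕ) (h : ∀ i ∈ s, j i + d i = L i) :
    multinomial s j * (∏ i ∈ s, (L i + c).choose (j i + c)) * (∑ i ∈ s, L i).choose (∑ i ∈ s, d i) ≤
      (∑ i ∈ s, L i + c).choose (∑ i ∈ s, d i) * multinomial s L *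
        ∏ i ∈ s, (L i).choose (j i) := by
  have hshift : (∏ i ∈ s, (L i + c).choose (j i + c)) * ∏ i ∈ s, (d i)! =
      ∏ i ∈ s, (L i + c).descFactorial (d i) := by
    rw [← prod_mul_distrib]
    refine prod_congr rfl fun i hi => ?_
    rw [choose_symm_of_eq_add (a := j i + c) (b := d i) (by have := h i hi; omega),
      descFactorial_eq_factorial_mul_choose, mul_comm]
  have hunshift : (∏ i ∈ s, (L i).choose (j i)) * ∏ i ∈ s, (d i)! =
      ∏ i ∈ s, (L i).descFactorial (d i) := by
    rw [← prod_mul_distrib]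
    refine prod_congr rfl fun i hi => ?_
    rw [choose_symm_of_eq_add (h i hi).symm, descFactorial_eq_factorial_mul_choose, mul_comm]
  refine le_of_mul_le_mul_right (a := (∑ i ∈ s, d i)! * ∏ i ∈ s, (d i)!) ?_
    (Nat.mul_pos (factorial_pos _) (prod_pos fun i _ => factorial_pos (d i)))
  calc multinomial s j * (∏ i ∈ s, (L i + c).choose (j i + c)) *
        (∑ i ∈ s, L i).choose (∑ i ∈ s, d i) * ((∑ i ∈ s, d i)! * ∏ i ∈ s, (d i)!)
      = multinomial s j * (∑ i ∈ s, L i).descFactorial (∑ i ∈ s, d i) *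
          ∏ i ∈ s, (L i + c).descFactorial (d i) := by
        rw [descFactorial_eq_factorial_mul_choose, ← hshift]; ring
    _ = multinomial s L * (∏ i ∈ s, (L i).descFactorial (d i)) *
          ∏ i ∈ s, (L i + c).descFactorial (d i) := by
        rw [multinomial_mul_descFactorial_sum h]
    _ ≤ multinomial s L * (∏ i ∈ s, (L i).descFactorial (d i)) *
          (∑ i ∈ s, L i + c).descFactorial (∑ i ∈ s, d i) := by
        gcongr
        exact prod_descFactorial_add_le c fun i hi => by have := h i hi; omega
    _ = (∑ i ∈ s, L i + c).choose (∑ i ∈ s, d i) * multinomial s L *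
          (∏ i ∈ s, (L i).choose (j i)) * ((∑ i ∈ s, d i)! * ∏ i ∈ s, (d i)!) := by
        rw [descFactorial_eq_factorial_mul_choose, ← hunshift]; ring

end Multinomial

theorem sum_multinomial_mul_prod_choose_le {n : ℕ} (L : Fin n → ℕ) (c : ℕ) {l k : ℕ}
    (hsum : ∑ i, L i = l) (hk : k ≤ l) :
    ∑ j ∈ (Finset.Nat.antidiagonalTuple n (l - k)).filter (fun j => ∀ i, j i ≤ L i),
        multinomial univ j * ∏ i, (L i + c).choose (j i + c) ≤
      (l + c).choose k * multinomial univ L := by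
  set F := (Finset.Nat.antidiagonalTuple n (l - k)).filter (fun j => ∀ i, j i ≤ L i)
  have hterm : ∀ j ∈ F, multinomial univ j * (∏ i, (L i + c).choose (j i + c)) * l.choose k ≤
      (l + c).choose k * multinomial univ L * ∏ i, (L i).choose (j i) := by
    intro j hj
    obtain ⟨hjsum, hjL⟩ := mem_filter.mp hj
    rw [Finset.Nat.mem_antidiagonalTuple] at hjsum
    have hsplit : ∀ i ∈ univ, j i + (L i - j i) = L i := fun i _ => by have := hjL i; omega
    have hd : ∑ i, (L i - j i) = k := by
      have := sum_congr rfl hsplit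
      rw [sum_add_distrib, hjsum, hsum] at this
      omega
    simpa only [hsum, hd] using multinomial_mul_prod_choose_le c hsplit
  refine le_of_mul_le_mul_right (a := l.choose k) ?_ (choose_pos hk)
  calc (∑ j ∈ F, multinomial univ j * ∏ i, (L i + c).choose (j i + c)) * l.choose k
      ≤ ∑ j ∈ F, (l + c).choose k * multinomial univ L * ∏ i, (L i).choose (j i) := by
        rw [sum_mul]; exact sum_le_sum hterm
    _ ≤ ∑ j ∈ Finset.Nat.antidiagonalTuple n (l - k),
          (l + c).choose k * multinomial univ L * ∏ i, (L i).choose (j i) :=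
        sum_le_sum_of_subset (filter_subset _ _)
    _ = (l + c).choose k * multinomial univ L * l.choose k := by
        rw [← mul_sum, ← piAntidiag_univ_fin_eq_antidiagonalTuple, sum_piAntidiag_prod_choose,
          hsum, choose_symm hk]

theorem choose_two_succ (n : ℕ) : (n + 1).choose 2 = n.choose 2 + n := by
  rw [choose_succ_succ', choose_one_right, add_comm]

/- Passing from `k` to `k + 1` multiplies the left side by `(j + 3) / 2 ^ (j + 1) ≤ 1`, where
`j = l - k - 1`; the factor `3` is the slack spent when `j = 0`, in the step to `k = l`. -/
theorem three_mul_descFactorial_mul_two_pow_choose_le {k : ℕ} (hk : 1 ≤ k) :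
    ∀ {j : ℕ}, 1 ≤ j → 5 ≤ k + j →
      3 * ((k + j + 2).descFactorial k * 2 ^ j.choose 2) ≤ 2 ^ ((k + j).choose 2 + k) := by
  induction k, hk using Nat.le_induction with
  | base =>
    intro j _ hj
    have hexp : 3 * (j + 3) ≤ 2 ^ (j + 1) := by
      obtain ⟨m, rfl⟩ := Nat.exists_eq_add_of_le' (show 4 ≤ j by omega)
      have := Nat.lt_two_pow_self (n := m)
      have h32 : 2 ^ (m + 4 + 1) = 32 * 2 ^ m := by ring
      omega
    rw [descFactorial_one, add_comm 1 j, choose_two_succ]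
    calc 3 * ((j + 1 + 2) * 2 ^ j.choose 2) = 3 * (j + 3) * 2 ^ j.choose 2 := by ring
      _ ≤ 2 ^ (j + 1) * 2 ^ j.choose 2 := by gcongr
      _ = 2 ^ (j.choose 2 + j + 1) := by ring
  | succ k hk ih =>
    intro j hj hkj
    have hexp : j + 3 ≤ 2 ^ (j + 1) := by
      have := Nat.lt_two_pow_self (n := j)
      rw [pow_succ]
      omega
    have hIH := ih (j := j + 1) (by omega) (by omega)
    rw [show k + (j + 1) = k + 1 + j by ring, choose_two_succ] at hIH
    have htop : k + 1 + j + 2 - k = j + 3 := by omega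
    refine le_of_mul_le_mul_right (a := 2 ^ j) ?_ (by positivity)
    calc 3 * ((k + 1 + j + 2).descFactorial (k + 1) * 2 ^ j.choose 2) * 2 ^ j
        = (j + 3) * (3 * ((k + 1 + j + 2).descFactorial k * 2 ^ (j.choose 2 + j))) := by
          rw [descFactorial_succ, htop]; ring
      _ ≤ 2 ^ (j + 1) * 2 ^ ((k + 1 + j).choose 2 + k) := Nat.mul_le_mul hexp hIH
      _ = 2 ^ ((k + 1 + j).choose 2 + (k + 1)) * 2 ^ j := by ring

theorem two_mul_descFactorial_mul_two_pow_choose_le {l k : ℕ} (hl : 5 ≤ l) (hk : 1 ≤ k)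
    (hkl : k ≤ l) :
    2 * ((l + 2).descFactorial k * 2 ^ (l - k).choose 2) ≤ 2 ^ (l.choose 2 + k) := by
  rcases hkl.lt_or_eq with hlt | rfl
  · have h := three_mul_descFactorial_mul_two_pow_choose_le hk (j := l - k) (by omega) (by omega)
    rw [Nat.add_sub_cancel' hkl] at h
    omega
  · obtain ⟨m, rfl⟩ : ∃ m, k = m + 1 := ⟨k - 1, by omega⟩
    have h := three_mul_descFactorial_mul_two_pow_choose_le (k := m) (j := 1) (by omega) le_rfl
      (by omega)
    rw [descFactorial_succ, show m + 1 + 2 - m = 3 by omega, Nat.sub_self]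
    rw [show choose 1 2 = 0 from rfl, pow_zero, mul_one] at h
    rw [choose_zero_succ, pow_zero, mul_one, ← add_assoc, pow_succ]
    omega

end Nat

theorem Real.sum_Icc_pow_div_factorial_lt_exp_sub_one {x : ℝ} (hx : 0 < x) (l : ℕ) :
    ∑ k ∈ Icc 1 l, x ^ k / k ! < exp x - 1 := by
  have h := sum_le_exp_of_nonneg hx.le (l + 2)
  rw [sum_range_succ, range_eq_Ico, sum_eq_sum_Ico_succ_bot (by omega),
    Ico_add_one_right_eq_Icc] at h
  have : 0 < x ^ (l + 1) / (l + 1)! := by positivity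
  simp only [pow_zero, factorial_zero, cast_one, div_one] at h
  linarith

theorem stmt_9_general (n : ℕ) (l : ℕ) (L : Fin n → ℕ)
    (hsum : ∑ i, L i = l) (hl : 5 ≤ l)
    (a : ℕ → ℕ)
    (ha : ∀ k, a k = 2 ^ (Nat.choose (l - k) 2) *
      ∑ j ∈ (Finset.Nat.antidiagonalTuple n (l - k)).filter (fun j => ∀ i, j i ≤ L i),
        Nat.multinomial Finset.univ j * ∏ i, Nat.choose (L i + 2) (j i + 2)) :
    (∑ k ∈ Finset.Icc 1 l, (2 : ℝ) ^ k * (a k : ℝ)) <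
      (Real.exp 4 - 1) / 2 * 2 ^ (Nat.choose l 2) * (Nat.multinomial Finset.univ L : ℝ) := by
  set M := multinomial univ L
  have hak : ∀ k ∈ Icc 1 l, 2 * k ! * a k ≤ 2 ^ (l.choose 2 + k) * M := by
    intro k hk
    obtain ⟨hk1, hkl⟩ := mem_Icc.mp hk
    calc 2 * k ! * a k ≤ 2 * k ! * (2 ^ (l - k).choose 2 * ((l + 2).choose k * M)) := by
          rw [ha]; gcongr; exact sum_multinomial_mul_prod_choose_le L 2 hsum hkl
      _ = 2 * ((l + 2).descFactorial k * 2 ^ (l - k).choose 2) * M := by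
          rw [descFactorial_eq_factorial_mul_choose]; ring
      _ ≤ 2 ^ (l.choose 2 + k) * M := by
          gcongr; exact two_mul_descFactorial_mul_two_pow_choose_le hl hk1 hkl
  have hterm : ∀ k ∈ Icc 1 l, (2 : ℝ) ^ k * a k ≤ 4 ^ k / k ! * (2 ^ l.choose 2 * M / 2) := by
    intro k hk
    have h : (2 * k ! * a k : ℝ) ≤ 2 ^ (l.choose 2 + k) * M := by exact_mod_cast hak k hk
    rw [_root_.div_mul_div_comm, le_div_iff₀ (by positivity)]
    calc (2 : ℝ) ^ k * a k * (k ! * 2) = 2 ^ k * (2 * k ! * a k) := by ring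
      _ ≤ 2 ^ k * (2 ^ (l.choose 2 + k) * M) := by gcongr
      _ = 4 ^ k * (2 ^ l.choose 2 * M) := by
          rw [show (4 : ℝ) ^ k = 2 ^ k * 2 ^ k by rw [← mul_pow]; norm_num]; ring
  calc ∑ k ∈ Icc 1 l, (2 : ℝ) ^ k * a k
      ≤ (∑ k ∈ Icc 1 l, (4 : ℝ) ^ k / k !) * (2 ^ l.choose 2 * M / 2) := by
        rw [sum_mul]; exact sum_le_sum hterm
    _ < (Real.exp 4 - 1) * (2 ^ l.choose 2 * M / 2) := by
        have : (0 : ℝ) < M := by exact_mod_cast multinomial_pos univ L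
        gcongr
        exact Real.sum_Icc_pow_div_factorial_lt_exp_sub_one (by norm_num) l
    _ = (Real.exp 4 - 1) / 2 * 2 ^ l.choose 2 * M := by ring

theorem stmt_9 (n : ℕ) (hn : 2 ≤ n) (l : ℕ) (L : Fin n → ℕ)
    (hL : ∀ i, 0 < L i) (hsum : ∑ i, L i = l) (hl : 5 ≤ l)
    (a : ℕ → ℕ)
    (ha : ∀ k, a k = 2 ^ (Nat.choose (l - k) 2) *
      ∑ j ∈ (Finset.Nat.antidiagonalTuple n (l - k)).filter (fun j => ∀ i, j i ≤ L i),
        Nat.multinomial Finset.univ j * ∏ i, Nat.choose (L i + 2) (j i + 2)) :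
    (∑ k ∈ Finset.Icc 1 l, (2 : ℝ) ^ k * (a k : ℝ)) <
      (Real.exp 4 - 1) / 2 * 2 ^ (Nat.choose l 2) * (Nat.multinomial Finset.univ L : ℝ) :=
  stmt_9_general n l L hsum hl a ha
end
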